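/- arXiv:1804.00141 — 7 statements merged into one kernel-verified Lean document; each statement's English description precedes it below -/
import Mathlib

section
/- Every stable matching in a graph with strict preference lists is popular; that is, if M is a matching with no blocking edge, then for every matching M', the number of vertices preferring M to M' is at least the number of vertices preferring M' to M. -/
open Finset

section Defs
variable {V : Type*}

/-- A matching given as a partial partner function: if `M u = some v` then
`(u,v)` is an edge and `v`'s partner is `u`. -/
def IsMatching (adj : V → V → Prop) (M : V → Option V) : Prop :=
  ∀ u v, M u = some v → adj u v ∧ M v = some u

/-- Vertex `u` prefers matching `M` to `M'`: matched in `M` and unmatched in `M'`,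
or matched in both and prefers its `M`-partner. -/
def PrefersM (pref : V → V → V → Bool) (M M' : V → Option V) (u : V) : Bool :=
  match M u, M' u with
  | some a, some b => pref u a b
  | some _, none => true
  | _, _ => false

/-- `phiM pref M M'` = number of vertices preferring `M` to `M'`. -/
def phiM [Fintype V] (pref : V → V → V → Bool) (M M' : V → Option V) : ℕ :=
  (Finset.univ.filter fun u => PrefersM pref M M' u = true).card

/-- `M` is popular: no matching is preferred by strictly more vertices. -/
def Popular [Fintype V] (adj : V → V → Prop) (pref : V → V → V → Bool)
    (M : V → Option V) : Prop :=
  ∀ M', IsMatching adj M' → phiM pref M' M ≤ phiM pref M M'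

/-- `a` prefers `b` to its assignment under `M` (being unmatched is worst). -/
def PrefOver (pref : V → V → V → Bool) (M : V → Option V) (a b : V) : Prop :=
  match M a with
  | none => True
  | some c => pref a b c = true

/-- `(a,b)` is a blocking edge with respect to `M`. -/
def Blocking (adj : V → V → Prop) (pref : V → V → V → Bool) (M : V → Option V)
    (a b : V) : Prop :=
  adj a b ∧ PrefOver pref M a b ∧ PrefOver pref M b a

/-- Number of matched vertices (twice the number of edges of `M`). -/
def msize [Fintype V] (M : V → Option V) : ℕ :=
  (Finset.univ.filter fun u => (M u).isSome = true).card

/-- `vote u v v'` where `u` itself encodes "unmatched"; every vertex regards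
itself as strictly worse than any neighbor. -/
def vote [DecidableEq V] (pref : V → V → V → Bool) (u v v' : V) : ℤ :=
  if v = v' then 0
  else if v' = u then 1
  else if v = u then -1
  else if pref u v v' then 1 else -1

/-- `wt_M(a,b) = vote_a(b, M̃(a)) + vote_b(a, M̃(b))`. -/
def wtEdge [DecidableEq V] (pref : V → V → V → Bool) (M : V → Option V) (a b : V) : ℤ :=
  vote pref a b ((M a).getD a) + vote pref b a ((M b).getD b)

/-- `wt_M(u,u)`: 0 if `u` is unmatched in `M`, else −1. -/
def wtSelf (M : V → Option V) (u : V) : ℤ :=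
  if (M u).isSome then -1 else 0

end Defs

/-- Every stable matching (a matching with no blocking edge) is popular. -/
theorem stable_implies_popular {V : Type*} [Fintype V] [DecidableEq V]
    (adj : V → V → Prop) (hsymm : ∀ u v, adj u v → adj v u) (hadjirr : ∀ u, ¬ adj u u)
    (pref : V → V → V → Bool)
    (hpirr : ∀ u a, pref u a a = false)
    (hasym : ∀ u a b, pref u a b = true → pref u b a = false)
    (htrans : ∀ u a b c, pref u a b = true → pref u b c = true → pref u a c = true)
    (htot : ∀ u a b, adj u a → adj u b → a ≠ b → pref u a b = true ∨ pref u b a = true)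
    (M : V → Option V) (hM : IsMatching adj M)
    (hstable : ∀ a b, ¬ Blocking adj pref M a b) :
    ∀ M', IsMatching adj M' → phiM pref M' M ≤ phiM pref M M' := by
  intro M' hM'
  -- partners are never self
  have hne : ∀ u v, M u = some v → v ≠ u := by
    intro u v h he; exact hadjirr u (he ▸ (hM u v h).1)
  have hne' : ∀ u v, M' u = some v → v ≠ u := by
    intro u v h he; exact hadjirr u (he ▸ (hM' u v h).1)
  set f : V → ℤ := fun u => vote pref u ((M' u).getD u) ((M u).getD u) with hf
  -- pointwise identity
  have hpoint : ∀ u, f u =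
      (if PrefersM pref M' M u = true then (1:ℤ) else 0) -
      (if PrefersM pref M M' u = true then (1:ℤ) else 0) := by
    intro u
    rcases hM'u : M' u with _ | a <;> rcases hMu : M u with _ | b
    · simp [hf, vote, PrefersM, hM'u, hMu]
    · have hbu := hne u b hMu
      simp [hf, vote, PrefersM, hM'u, hMu, hbu, Ne.symm hbu]
    · have hau := hne' u a hM'u
      simp [hf, vote, PrefersM, hM'u, hMu, hau]
    · have hau := hne' u a hM'u
      have hbu := hne u b hMu
      by_cases hab : a = b
      · subst hab
        simp [hf, vote, PrefersM, hM'u, hMu, hpirr]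
      · rcases htot u a b (hM' u a hM'u).1 (hM u b hMu).1 hab with hp | hp
        · have hnp := hasym u a b hp
          simp [hf, vote, PrefersM, hM'u, hMu, hab, hau, hbu, hp, hnp]
        · have hnp := hasym u b a hp
          simp [hf, vote, PrefersM, hM'u, hMu, hab, hau, hbu, hp, hnp]
  -- edge weight is nonpositive for adjacent pairs
  have hwt : ∀ a b, adj a b → wtEdge pref M a b ≤ 0 := by
    intro a b hadj
    have hab : a ≠ b := fun h => hadjirr a (h ▸ hadj)
    by_cases hMa : M a = some b
    · have hMb : M b = some a := (hM a b hMa).2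
      simp [wtEdge, vote, hMa, hMb]
    · have hMb : M b ≠ some a := fun h => hMa (hM b a h).2
      have key : ∀ c d, adj c d → c ≠ d → M c ≠ some d →
          (vote pref c d ((M c).getD c) = 1 ∧ PrefOver pref M c d) ∨
          vote pref c d ((M c).getD c) = -1 := by
        intro c d hcd hne2 hM2
        rcases hMc : M c with _ | e
        · left
          constructor
          · simp [vote, (Ne.symm hne2)]
          · simp [PrefOver, hMc]
        · have hde : d ≠ e := fun h => hM2 (h ▸ hMc)
          have hec : e ≠ c := hne c e hMc
          by_cases hp : pref c d e = true
          · left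
            constructor
            · simp [vote, hMc, hde, hec, (Ne.symm hne2), hp]
            · simp [PrefOver, hMc, hp]
          · right
            simp [vote, hMc, hde, hec, (Ne.symm hne2), hp]
      rcases key a b hadj hab hMa with ⟨h1, hp1⟩ | h1
      · rcases key b a (hsymm a b hadj) (Ne.symm hab) hMb with ⟨h2, hp2⟩ | h2
        · exact absurd ⟨hadj, hp1, hp2⟩ (hstable a b)
        · simp [wtEdge, h1, h2]
      · have h2 : vote pref b a ((M b).getD b) ≤ 1 := by
          unfold vote; split_ifs <;> omega
        simp only [wtEdge, h1]
        omega
  -- total sum is nonpositive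
  have hsum : ∑ u, f u ≤ 0 := by
    classical
    rw [← Finset.sum_filter_add_sum_filter_not Finset.univ (fun u => (M' u).isSome = true)]
    have h2 : ∑ u ∈ Finset.univ.filter (fun u => ¬ (M' u).isSome = true), f u ≤ 0 := by
      apply Finset.sum_nonpos
      intro u hu
      simp only [Finset.mem_filter, Option.isSome_iff_exists] at hu
      have hMu' : M' u = none := by
        rcases hM'2 : M' u with _ | a
        · rfl
        · exact absurd ⟨a, hM'2⟩ hu.2
      rcases hMu : M u with _ | b
      · simp [hf, vote, hMu', hMu]
      · have hbu := hne u b hMu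
        simp [hf, vote, hMu', hMu, hbu, Ne.symm hbu]
    have h1 : ∑ u ∈ Finset.univ.filter (fun u => (M' u).isSome = true), f u ≤ 0 := by
      set s := Finset.univ.filter (fun u => (M' u).isSome = true) with hs
      set g : V → V := fun u => (M' u).getD u with hg
      have hmem : ∀ u ∈ s, M' u = some (g u) ∧ g u ∈ s ∧ g (g u) = u := by
        intro u hu
        simp only [hs, Finset.mem_filter, Option.isSome_iff_exists] at hu
        obtain ⟨a, ha⟩ := hu.2
        have hga : g u = a := by simp [hg, ha]
        have hMa : M' a = some u := (hM' u a ha).2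
        refine ⟨by rw [hga]; exact ha, ?_, ?_⟩
        · simp [hs, hga, hMa]
        · simp [hg, ha, hMa]
      have hinv : ∑ u ∈ s, f (g u) = ∑ u ∈ s, f u := by
        apply Finset.sum_nbij' g g
        · intro a ha; exact (hmem a ha).2.1
        · intro a ha; exact (hmem a ha).2.1
        · intro a ha; exact (hmem a ha).2.2
        · intro a ha; exact (hmem a ha).2.2
        · intro a ha; rfl
      have hpair : ∑ u ∈ s, (f u + f (g u)) ≤ 0 := by
        apply Finset.sum_nonpos
        intro u hu
        obtain ⟨hMu', hgu, hgg⟩ := hmem u hu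
        have hMgu' : M' (g u) = some u := (hM' u (g u) hMu').2
        have hadj : adj u (g u) := (hM' u (g u) hMu').1
        have : f u + f (g u) = wtEdge pref M u (g u) := by
          simp [hf, wtEdge, hMu', hMgu']
        rw [this]
        exact hwt u (g u) hadj
      rw [Finset.sum_add_distrib, hinv] at hpair
      linarith
    linarith
  -- convert the sum to the difference of the two cardinalities
  have hcast : ∑ u, f u =
      (phiM pref M' M : ℤ) - (phiM pref M M' : ℤ) := by
    rw [Finset.sum_congr rfl (fun u _ => hpoint u), Finset.sum_sub_distrib]
    simp [phiM, Finset.sum_boole]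
  rw [hcast] at hsum
  have := sub_nonpos.mp hsum
  exact_mod_cast this
end

section
/- Let G be a roommates instance with strict preferences and M a matching in G. Suppose v is unmatched in M, (v,u) ∈ E with (u,w) ∈ M, and (w,t) is a blocking edge with respect to M where t ∉ {v,u,w}. Then the matching M' = (M \ {(u,w)}) ∪ {(v,u),(w,t)} (if t was matched in M, also removing t's matching edge) can make only v, w, t better off and only u and M(t) worse off; if t is matched to some t' in M, then exactly vertices v, w, t prefer M' to M and exactly u, t' prefer M to M', so M' is more popular than M. -/
open Finset

/-- If `v` is unmatched in `M`, `(v,u)` is an edge with `(u,w) ∈ M`, `(w,t)` is a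
blocking edge with `t` matched in `M` to `t'`, and `u` prefers `w` to `v`, then in
`M' = (M \ {(u,w),(t,t')}) ∪ {(v,u),(w,t)}` exactly `v,w,t` prefer `M'` to `M`
and exactly `u,t'` prefer `M` to `M'`; hence `M'` is more popular than `M`. -/
theorem exchange_more_popular {V : Type*} [Fintype V] [DecidableEq V]
    (adj : V → V → Prop) (hsymm : ∀ u v, adj u v → adj v u)
    (pref : V → V → V → Bool)
    (hpirr : ∀ u a, pref u a a = false)
    (hasym : ∀ u a b, pref u a b = true → pref u b a = false)
    (M : V → Option V) (hM : IsMatching adj M)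
    (v u w t t' : V)
    (hdist : v ≠ u ∧ v ≠ w ∧ v ≠ t ∧ v ≠ t' ∧ u ≠ w ∧ u ≠ t ∧ u ≠ t' ∧ w ≠ t ∧ w ≠ t' ∧ t ≠ t')
    (hv : M v = none) (hvu : adj v u) (huw : M u = some w)
    (hblock : Blocking adj pref M w t) (htt' : M t = some t')
    (hu_worse : pref u w v = true) :
    (∀ x, PrefersM pref
        (fun x => if x = v then some u else if x = u then some v else if x = w then some t
          else if x = t then some w else if x = t' then none else M x) M x = true
        ↔ (x = v ∨ x = w ∨ x = t)) ∧
    (∀ x, PrefersM pref M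
        (fun x => if x = v then some u else if x = u then some v else if x = w then some t
          else if x = t then some w else if x = t' then none else M x) x = true
        ↔ (x = u ∨ x = t')) ∧
    phiM pref
        (fun x => if x = v then some u else if x = u then some v else if x = w then some t
          else if x = t then some w else if x = t' then none else M x) M
      > phiM pref M
        (fun x => if x = v then some u else if x = u then some v else if x = w then some t
          else if x = t then some w else if x = t' then none else M x) := by
  obtain ⟨hvu', hvw, hvt, hvt', huw', hut, hut', hwt, hwt', htt⟩ := hdist
  obtain ⟨hadjwt, hPw, hPt⟩ := hblock
  have hMw : M w = some u := (hM u w huw).2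
  have hMt' : M t' = some t := (hM t t' htt').2
  have hpw : pref w t u = true := by
    unfold PrefOver at hPw; rw [hMw] at hPw; exact hPw
  have hpt : pref t w t' = true := by
    unfold PrefOver at hPt; rw [htt'] at hPt; exact hPt
  have huv : pref u v w = false := by
    cases h : pref u v w with
    | false => rfl
    | true => have := hasym u v w h; rw [hu_worse] at this; exact absurd this (by simp)
  have hwu : pref w u t = false := by
    cases h : pref w u t with
    | false => rfl
    | true => have := hasym w _ _ h; rw [hpw] at this; exact absurd this (by simp)
  have htw : pref t t' w = false := by
    cases h : pref t t' w with
    | false => rfl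
    | true => have := hasym t _ _ h; rw [hpt] at this; exact absurd this (by simp)
  have h1 : ∀ x, PrefersM pref
        (fun x => if x = v then some u else if x = u then some v else if x = w then some t
          else if x = t then some w else if x = t' then none else M x) M x = true
        ↔ (x = v ∨ x = w ∨ x = t) := by
    intro x
    by_cases h : x = v
    · subst h; simp [PrefersM, hv]
    · by_cases h2 : x = u
      · subst h2; simp [PrefersM, h, huw, huv, hvu', huw', hut, hut']
      · by_cases h3 : x = w
        · subst h3; simp [PrefersM, h, h2, hMw, hpw, hwt, hwt']
        · by_cases h4 : x = t
          · subst h4; simp [PrefersM, h, h2, h3, htt', hpt, htt]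
          · by_cases h5 : x = t'
            · subst h5; simp [PrefersM, h, h2, h3, h4, hMt']
            · simp only [PrefersM, h, h2, h3, h4, h5, if_false]
              cases hMx : M x with
              | none => simp
              | some a => simp [hMx, hpirr, h, h2, h3, h4, h5]
  have h2 : ∀ x, PrefersM pref M
        (fun x => if x = v then some u else if x = u then some v else if x = w then some t
          else if x = t then some w else if x = t' then none else M x) x = true
        ↔ (x = u ∨ x = t') := by
    intro x
    by_cases h : x = v
    · subst h; simp [PrefersM, hv, hvu', hvt']
    · by_cases h2 : x = u
      · subst h2; simp [PrefersM, h, huw, hu_worse, hut']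
      · by_cases h3 : x = w
        · subst h3; simp [PrefersM, h, h2, hMw, hwu, hwt']
        · by_cases h4 : x = t
          · subst h4; simp [PrefersM, h, h2, h3, htt', htw, htt]
          · by_cases h5 : x = t'
            · subst h5; simp [PrefersM, h, h2, h3, h4, hMt']
            · simp only [PrefersM, h, h2, h3, h4, h5, if_false]
              cases hMx : M x with
              | none => simp
              | some a => simp [hMx, hpirr, h, h2, h3, h4, h5]
  refine ⟨h1, h2, ?_⟩
  have e1 : (Finset.univ.filter fun x => PrefersM pref
        (fun x => if x = v then some u else if x = u then some v else if x = w then some t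
          else if x = t then some w else if x = t' then none else M x) M x = true)
      = {v, w, t} := by
    ext x; simp [h1 x]
  have e2 : (Finset.univ.filter fun x => PrefersM pref M
        (fun x => if x = v then some u else if x = u then some v else if x = w then some t
          else if x = t then some w else if x = t' then none else M x) x = true)
      = {u, t'} := by
    ext x; simp [h2 x]
  unfold phiM
  rw [e1, e2]
  rw [Finset.card_insert_of_notMem (by simp [hvw, hvt]),
      Finset.card_insert_of_notMem (by simp [hwt]),
      Finset.card_insert_of_notMem (by simp [hut'])]
  simp
end

section
/- Let M and N be matchings of a graph H, and let wt_M be the weight function assigning to each edge (u,v) the sum of u's vote comparing v to its M-assignment and v's vote comparing u to its M-assignment (votes in {−1,0,1}, where being unmatched is worse than any neighbor), extended by self-loops of weight 0 for M-unmatched vertices and −1 for M-matched vertices. Let Ñ be the perfect matching in the augmented graph obtained from N by adding self-loops at N-unmatched vertices. Then Δ(N,M) := φ(N,M) − φ(M,N) equals wt_M(Ñ), the total wt_M-weight of Ñ. -/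
/-!
Both sides are sums over vertices: `φ(N,M) − φ(M,N)` counts `+1` for each vertex preferring
`N` and `−1` for each vertex preferring `M`, and with "unmatched" encoded as the vertex itself,
which every vertex ranks below all its neighbours, this signed count at `u` is exactly
`vote_u(Ñ(u), M̃(u))`.
-/

open Finset

section

variable {V : Type*}

lemma phiM_eq_sum [Fintype V] (pref : V → V → V → Bool) (M M' : V → Option V) :
    (phiM pref M M' : ℤ) = ∑ u, if PrefersM pref M M' u = true then (1 : ℤ) else 0 := by
  rw [phiM, card_filter, Nat.cast_sum]
  simp only [Nat.cast_ite, Nat.cast_one, Nat.cast_zero]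

variable [DecidableEq V] (pref : V → V → V → Bool) {u a b : V}

lemma vote_self_left (hb : b ≠ u) : vote pref u u b = -1 := by
  simp [vote, hb.symm, hb]

lemma vote_self_right (ha : a ≠ u) : vote pref u a u = 1 := by
  simp [vote, ha]

lemma vote_eq_sub_of_ne (hab : a ≠ b) (hau : a ≠ u) (hbu : b ≠ u)
    (hasym : pref u a b = true → pref u b a = false)
    (htot : pref u a b = true ∨ pref u b a = true) :
    vote pref u a b
      = (if pref u a b = true then (1 : ℤ) else 0) - if pref u b a = true then 1 else 0 := by
  by_cases h : pref u a b = true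
  · simp [vote, hab, hau, hbu, h, hasym h]
  · simp [vote, hab, hau, hbu, h, htot.resolve_left h]

lemma vote_getD_eq_prefersM_sub (adj : V → V → Prop) (hadj : ¬ adj u u)
    (hirr : ∀ a, pref u a a = false)
    (hasym : ∀ a b, pref u a b = true → pref u b a = false)
    (htot : ∀ a b, adj u a → adj u b → a ≠ b → pref u a b = true ∨ pref u b a = true)
    (M N : V → Option V) (hM : ∀ b, M u = some b → adj u b)
    (hN : ∀ a, N u = some a → adj u a) :
    vote pref u ((N u).getD u) ((M u).getD u)
      = (if PrefersM pref N M u = true then (1 : ℤ) else 0)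
        - if PrefersM pref M N u = true then 1 else 0 := by
  have ne_self : ∀ {x}, adj u x → x ≠ u := fun hx h => hadj (h ▸ hx)
  cases hNu : N u with
  | none =>
    cases hMu : M u with
    | none => simp [vote, PrefersM, hNu, hMu]
    | some b => simp [PrefersM, hNu, hMu, vote_self_left pref (ne_self (hM b hMu))]
  | some a =>
    cases hMu : M u with
    | none => simp [PrefersM, hNu, hMu, vote_self_right pref (ne_self (hN a hNu))]
    | some b =>
      simp only [PrefersM, hNu, hMu, Option.getD_some]
      by_cases hab : a = b
      · subst hab
        simp [vote, hirr a]
      · exact vote_eq_sub_of_ne pref hab (ne_self (hN a hNu)) (ne_self (hM b hMu))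
          (hasym a b) (htot a b (hN a hNu) (hM b hMu) hab)

end

theorem delta_eq_weight_general {V : Type*} [Fintype V] [DecidableEq V]
    (adj : V → V → Prop) (hadjirr : ∀ u, ¬ adj u u)
    (pref : V → V → V → Bool)
    (hpirr : ∀ u a, pref u a a = false)
    (hasym : ∀ u a b, pref u a b = true → pref u b a = false)
    (htot : ∀ u a b, adj u a → adj u b → a ≠ b → pref u a b = true ∨ pref u b a = true)
    (M N : V → Option V) (hM : IsMatching adj M) (hN : IsMatching adj N) :
    (phiM pref N M : ℤ) - (phiM pref M N : ℤ)
      = ∑ u : V, vote pref u ((N u).getD u) ((M u).getD u) := by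
  rw [phiM_eq_sum, phiM_eq_sum, ← sum_sub_distrib]
  refine sum_congr rfl fun u _ => ?_
  exact (vote_getD_eq_prefersM_sub pref adj (hadjirr u) (hpirr u) (hasym u) (htot u) M N
    (fun b hb => (hM u b hb).1) (fun a ha => (hN u a ha).1)).symm

/-- `Δ(N,M) = φ(N,M) − φ(M,N)` equals the total `wt_M`-weight of the perfect
matching `Ñ` of the augmented graph, i.e. `∑_u vote_u(Ñ(u), M̃(u))` where
`Ñ(u)`, `M̃(u)` are the partners of `u` (or `u` itself if unmatched). -/
theorem delta_eq_weight {V : Type*} [Fintype V] [DecidableEq V]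
    (adj : V → V → Prop) (hsymm : ∀ u v, adj u v → adj v u) (hadjirr : ∀ u, ¬ adj u u)
    (pref : V → V → V → Bool)
    (hpirr : ∀ u a, pref u a a = false)
    (hasym : ∀ u a b, pref u a b = true → pref u b a = false)
    (htot : ∀ u a b, adj u a → adj u b → a ≠ b → pref u a b = true ∨ pref u b a = true)
    (M N : V → Option V) (hM : IsMatching adj M) (hN : IsMatching adj N) :
    (phiM pref N M : ℤ) - (phiM pref M N : ℤ)
      = ∑ u : V, vote pref u ((N u).getD u) ((M u).getD u) :=
  delta_eq_weight_general adj hadjirr pref hpirr hasym htot M N hM hN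
end

section
/- Let M be a matching in a bipartite graph H = (A ∪ B, E) with strict preference lists, and suppose there is a vector α ∈ R^(A∪B) with Σ_u α_u = 0, α_a + α_b ≥ wt_M(a,b) for every edge (a,b) ∈ E, and α_u ≥ wt_M(u,u) for every vertex u. Then M is popular. -/
open Finset

/-!
Write `Ñ(u)` for the partner of `u` in a matching `N`, or `u` itself when `u` is unmatched.
Vertex by vertex, `vote_u(Ñ(u), M̃(u))` is `+1`, `-1` or `0` according as `u` prefers `N`, prefers `M`,
or is indifferent, so `Δ(N, M)` is the sum of these votes. Grouping the sum along the involution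
`Ñ` pairs it into `wt_M(a, b)` over the edges of `N` and `wt_M(u, u)` over its unmatched vertices;
the dual constraints bound these by `α_a + α_b` and `α_u`, and the total is `∑ α = 0`.
-/

theorem Finset.sum_le_sum_of_add_comp_involutive_le {ι β : Type*} [Fintype ι]
    [AddCommMonoid β] [LinearOrder β] [IsOrderedCancelAddMonoid β]
    {σ : ι → ι} (hσ : Function.Involutive σ) {f g : ι → β}
    (h : ∀ i, f i + f (σ i) ≤ g i + g (σ i)) :
    ∑ i, f i ≤ ∑ i, g i := by
  have hsum : ∑ i, (f i + f (σ i)) ≤ ∑ i, (g i + g (σ i)) := sum_le_sum fun i _ => h i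
  rw [sum_add_distrib, sum_add_distrib, hσ.bijective.sum_comp f, hσ.bijective.sum_comp g,
    ← two_nsmul, ← two_nsmul] at hsum
  exact le_of_nsmul_le_nsmul_right two_ne_zero hsum

section Matching

variable {V : Type*}

/-- The paper's `M̃(u)`. -/
def partnerOrSelf (M : V → Option V) (u : V) : V := (M u).getD u

variable {adj : V → V → Prop} {M : V → Option V}

theorem IsMatching.ne_of_eq_some (hM : IsMatching adj M) (hirr : ∀ u, ¬ adj u u)
    {u v : V} (h : M u = some v) : v ≠ u := by
  rintro rfl
  exact hirr v (hM v v h).1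

theorem IsMatching.partnerOrSelf_involutive (hM : IsMatching adj M) :
    Function.Involutive (partnerOrSelf M) := by
  intro u
  rcases h : M u with _ | v
  · simp [partnerOrSelf, h]
  · simp [partnerOrSelf, h, (hM u v h).2]

theorem IsMatching.partnerOrSelf_partnerOrSelf (hM : IsMatching adj M) {u v : V}
    (h : M u = some v) : partnerOrSelf M v = u := by
  simp [partnerOrSelf, (hM u v h).2]

variable [DecidableEq V] {pref : V → V → V → Bool}

theorem vote_partnerOrSelf_eq_wtSelf (hM : IsMatching adj M) (hirr : ∀ u, ¬ adj u u) (u : V) :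
    vote pref u u (partnerOrSelf M u) = wtSelf M u := by
  rcases hm : M u with _ | w
  · simp [vote, wtSelf, partnerOrSelf, hm]
  · have hw := hM.ne_of_eq_some hirr hm
    simp [vote, wtSelf, partnerOrSelf, hm, hw, hw.symm]

theorem vote_partnerOrSelf_eq {N : V → Option V} (hM : IsMatching adj M) (hN : IsMatching adj N)
    (hirr : ∀ u, ¬ adj u u) (hpirr : ∀ u a, pref u a a = false)
    (hasym : ∀ u a b, pref u a b = true → pref u b a = false)
    (htot : ∀ u a b, adj u a → adj u b → a ≠ b → pref u a b = true ∨ pref u b a = true) (u : V) :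
    vote pref u (partnerOrSelf N u) (partnerOrSelf M u) =
      (if PrefersM pref N M u then 1 else 0) - (if PrefersM pref M N u then 1 else 0) := by
  rcases hn : N u with _ | v <;> rcases hm : M u with _ | w
  · simp [vote, partnerOrSelf, PrefersM, hn, hm]
  · have hw := hM.ne_of_eq_some hirr hm
    simp [vote, partnerOrSelf, PrefersM, hn, hm, hw, hw.symm]
  · have hv := hN.ne_of_eq_some hirr hn
    simp [vote, partnerOrSelf, PrefersM, hn, hm, hv]
  · have hv := hN.ne_of_eq_some hirr hn
    have hw := hM.ne_of_eq_some hirr hm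
    by_cases hvw : v = w
    · subst hvw
      simp [vote, partnerOrSelf, PrefersM, hn, hm, hpirr]
    · rcases htot u v w (hN u v hn).1 (hM u w hm).1 hvw with hp | hp
      · simp [vote, partnerOrSelf, PrefersM, hn, hm, hv, hw, hvw, hp, hasym u v w hp]
      · simp [vote, partnerOrSelf, PrefersM, hn, hm, hv, hw, hvw, hp, hasym u w v hp]

theorem vote_add_vote_partnerOrSelf_le {N : V → Option V} (hM : IsMatching adj M)
    (hN : IsMatching adj N) (hirr : ∀ u, ¬ adj u u) {α : V → ℝ}
    (hedge : ∀ a b, adj a b → α a + α b ≥ ((wtEdge pref M a b : ℤ) : ℝ))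
    (hself : ∀ u, α u ≥ ((wtSelf M u : ℤ) : ℝ)) (u : V) :
    (vote pref u (partnerOrSelf N u) (partnerOrSelf M u) : ℝ) +
        vote pref (partnerOrSelf N u) (partnerOrSelf N (partnerOrSelf N u))
          (partnerOrSelf M (partnerOrSelf N u)) ≤
      α u + α (partnerOrSelf N u) := by
  rcases hn : N u with _ | v
  · have hu : partnerOrSelf N u = u := by simp [partnerOrSelf, hn]
    have := hself u
    rw [hu, hu, vote_partnerOrSelf_eq_wtSelf hM hirr]
    linarith
  · have hu : partnerOrSelf N u = v := by simp [partnerOrSelf, hn]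
    rw [hu, hN.partnerOrSelf_partnerOrSelf hn, ← Int.cast_add]
    exact hedge u v (hN u v hn).1

variable [Fintype V]

theorem phiM_sub_phiM_eq_sum_vote {N : V → Option V} (hM : IsMatching adj M)
    (hN : IsMatching adj N) (hirr : ∀ u, ¬ adj u u) (hpirr : ∀ u a, pref u a a = false)
    (hasym : ∀ u a b, pref u a b = true → pref u b a = false)
    (htot : ∀ u a b, adj u a → adj u b → a ≠ b → pref u a b = true ∨ pref u b a = true) :
    (phiM pref N M : ℤ) - phiM pref M N =
      ∑ u, vote pref u (partnerOrSelf N u) (partnerOrSelf M u) := by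
  simp only [vote_partnerOrSelf_eq hM hN hirr hpirr hasym htot, sum_sub_distrib, sum_boole,
    phiM]

end Matching

theorem witness_implies_popular_general {V : Type*} [Fintype V] [DecidableEq V]
    (adj : V → V → Prop) (hadjirr : ∀ u, ¬ adj u u)
    (pref : V → V → V → Bool)
    (hpirr : ∀ u a, pref u a a = false)
    (hasym : ∀ u a b, pref u a b = true → pref u b a = false)
    (htot : ∀ u a b, adj u a → adj u b → a ≠ b → pref u a b = true ∨ pref u b a = true)
    (M : V → Option V) (hM : IsMatching adj M)
    (α : V → ℝ) (hsum : ∑ u : V, α u = 0)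
    (hedge : ∀ a b, adj a b → α a + α b ≥ ((wtEdge pref M a b : ℤ) : ℝ))
    (hself : ∀ u, α u ≥ ((wtSelf M u : ℤ) : ℝ)) :
    Popular adj pref M := by
  intro N hN
  have hΔ := congrArg (Int.cast (R := ℝ))
    (phiM_sub_phiM_eq_sum_vote hM hN hadjirr hpirr hasym htot)
  push_cast at hΔ
  have hle := sum_le_sum_of_add_comp_involutive_le hN.partnerOrSelf_involutive
    (vote_add_vote_partnerOrSelf_le (pref := pref) hM hN hadjirr hedge hself)
  have : (phiM pref N M : ℝ) ≤ phiM pref M N := by linarith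
  exact_mod_cast this

/-- If a matching `M` in a bipartite instance admits a witness `α ∈ ℝ^(A∪B)`
(`∑ α = 0`, edge constraints, self-loop constraints), then `M` is popular. -/
theorem witness_implies_popular {V : Type*} [Fintype V] [DecidableEq V]
    (adj : V → V → Prop) (hsymm : ∀ u v, adj u v → adj v u) (hadjirr : ∀ u, ¬ adj u u)
    (side : V → Bool) (hbip : ∀ u v, adj u v → side u ≠ side v)
    (pref : V → V → V → Bool)
    (hpirr : ∀ u a, pref u a a = false)
    (hasym : ∀ u a b, pref u a b = true → pref u b a = false)
    (htrans : ∀ u a b c, pref u a b = true → pref u b c = true → pref u a c = true)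
    (htot : ∀ u a b, adj u a → adj u b → a ≠ b → pref u a b = true ∨ pref u b a = true)
    (M : V → Option V) (hM : IsMatching adj M)
    (α : V → ℝ) (hsum : ∑ u : V, α u = 0)
    (hedge : ∀ a b, adj a b → α a + α b ≥ ((wtEdge pref M a b : ℤ) : ℝ))
    (hself : ∀ u, α u ≥ ((wtSelf M u : ℤ) : ℝ)) :
    Popular adj pref M :=
  witness_implies_popular_general adj hadjirr pref hpirr hasym htot M hM α hsum hedge hself
end

section
/- Let M be a matching in a bipartite instance H with strict preferences admitting a witness α (Σ α_u = 0, α_a + α_b ≥ wt_M(a,b) for all edges, α_u ≥ wt_M(u,u) for all vertices). If (a,b) is an edge contained in some popular matching of H, then α_a + α_b = wt_M(a,b). -/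
open Finset

/-!
Write `vote_u(N, M)` for `u`'s vote between its `N`- and `M`-assignments, so that
`Δ(N, M) = ∑ u, vote_u(N, M)`, which is `≥ 0` when `N` is popular. Group the vertices into the
pairs and singletons of `N`: the witness constraints say that on each group the slack
`α - vote(N, M)` is nonnegative, while its total is `∑ α - Δ(N, M) = -Δ(N, M) ≤ 0`. Hence the
slack vanishes on every group of `N`, in particular on the edge `(a, b)`, where `vote_a + vote_b`
is exactly `wt_M(a, b)`.
-/

theorem Function.Involutive.add_comp_eq_zero_of_sum_nonpos {ι R : Type*} [Fintype ι]
    [AddCommMonoid R] [PartialOrder R] [IsOrderedAddMonoid R] {σ : ι → ι}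
    (hσ : Function.Involutive σ) {f : ι → R} (hpair : ∀ i, 0 ≤ f i + f (σ i))
    (hsum : ∑ i, f i ≤ 0) (i : ι) : f i + f (σ i) = 0 := by
  have htotal : ∑ j, (f j + f (σ j)) = 0 := by
    refine le_antisymm ?_ (Finset.sum_nonneg fun j _ => hpair j)
    rw [Finset.sum_add_distrib, hσ.bijective.sum_comp f]
    exact add_nonpos hsum hsum
  exact (Finset.sum_eq_zero_iff_of_nonneg fun j _ => hpair j).1 htotal i (Finset.mem_univ i)

section PopularEdge

variable {V : Type*}

/-- `M̃(u)` of the paper. -/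
def partner (M : V → Option V) (u : V) : V :=
  (M u).getD u

namespace IsMatching

variable {adj : V → V → Prop} {M : V → Option V}

theorem partner_involutive (hM : IsMatching adj M) : Function.Involutive (partner M) := by
  intro u
  cases hMu : M u with
  | none => simp [partner, hMu]
  | some v => simp [partner, hMu, (hM u v hMu).2]

theorem ne_of_eq_some_s10 (hM : IsMatching adj M) (hirr : ∀ u, ¬ adj u u) {u v : V}
    (h : M u = some v) : v ≠ u :=
  fun hvu => hirr u (hvu ▸ (hM u v h).1)

end IsMatching

section Votes

variable [DecidableEq V] {adj : V → V → Prop} {pref : V → V → V → Bool} {M N : V → Option V}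

def voteFor (pref : V → V → V → Bool) (N M : V → Option V) (u : V) : ℤ :=
  vote pref u (partner N u) (partner M u)

theorem voteFor_eq_prefersM_sub (hN : IsMatching adj N) (hM : IsMatching adj M)
    (hirr : ∀ u, ¬ adj u u) (hpirr : ∀ u a, pref u a a = false)
    (hasym : ∀ u a b, pref u a b = true → pref u b a = false)
    (htot : ∀ u a b, adj u a → adj u b → a ≠ b → pref u a b = true ∨ pref u b a = true)
    (u : V) :
    voteFor pref N M u =
      (if PrefersM pref N M u then 1 else 0) - (if PrefersM pref M N u then 1 else 0) := by
  unfold voteFor partner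
  cases hNu : N u with
  | none =>
    cases hMu : M u with
    | none => simp [vote, PrefersM, hNu, hMu]
    | some y =>
      have hy := hM.ne_of_eq_some_s10 hirr hMu
      simp [vote, PrefersM, hNu, hMu, hy, Ne.symm hy]
  | some x =>
    have hx := hN.ne_of_eq_some_s10 hirr hNu
    cases hMu : M u with
    | none => simp [vote, PrefersM, hNu, hMu, hx]
    | some y =>
      have hy := hM.ne_of_eq_some_s10 hirr hMu
      by_cases hxy : x = y
      · subst hxy
        simp [vote, PrefersM, hNu, hMu, hpirr]
      · rcases htot u x y (hN u x hNu).1 (hM u y hMu).1 hxy with h | h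
        · simp [vote, PrefersM, hNu, hMu, hxy, hx, hy, h, hasym u x y h]
        · simp [vote, PrefersM, hNu, hMu, hxy, hx, hy, h, hasym u y x h]

theorem sum_voteFor_eq_phiM_sub [Fintype V] (hN : IsMatching adj N) (hM : IsMatching adj M)
    (hirr : ∀ u, ¬ adj u u) (hpirr : ∀ u a, pref u a a = false)
    (hasym : ∀ u a b, pref u a b = true → pref u b a = false)
    (htot : ∀ u a b, adj u a → adj u b → a ≠ b → pref u a b = true ∨ pref u b a = true) :
    ∑ u, voteFor pref N M u = (phiM pref N M : ℤ) - phiM pref M N := by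
  simp only [voteFor_eq_prefersM_sub hN hM hirr hpirr hasym htot, Finset.sum_sub_distrib,
    Finset.sum_boole, phiM]

theorem voteFor_self_eq_wtSelf (hM : IsMatching adj M) (hirr : ∀ u, ¬ adj u u) {u : V}
    (hNu : N u = none) : voteFor pref N M u = wtSelf M u := by
  unfold voteFor partner
  cases hMu : M u with
  | none => simp [vote, wtSelf, hNu, hMu]
  | some c =>
    have hc := hM.ne_of_eq_some_s10 hirr hMu
    simp [vote, wtSelf, hNu, hMu, hc, Ne.symm hc]

theorem voteFor_add_voteFor_eq_wtEdge (hN : IsMatching adj N) {u v : V} (hNu : N u = some v) :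
    voteFor pref N M u + voteFor pref N M v = wtEdge pref M u v := by
  simp only [voteFor, wtEdge, partner, hNu, (hN u v hNu).2, Option.getD_some]

theorem voteFor_add_partner_le (hN : IsMatching adj N) (hM : IsMatching adj M)
    (hirr : ∀ u, ¬ adj u u) (α : V → ℝ)
    (hedge : ∀ a b, adj a b → α a + α b ≥ ((wtEdge pref M a b : ℤ) : ℝ))
    (hself : ∀ u, α u ≥ ((wtSelf M u : ℤ) : ℝ)) (u : V) :
    (voteFor pref N M u : ℝ) + voteFor pref N M (partner N u) ≤ α u + α (partner N u) := by
  cases hNu : N u with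
  | none =>
    simp only [partner, hNu, Option.getD_none, voteFor_self_eq_wtSelf hM hirr hNu]
    linarith [hself u]
  | some v =>
    simp only [partner, hNu, Option.getD_some]
    exact_mod_cast (voteFor_add_voteFor_eq_wtEdge hN hNu).symm ▸ hedge u v (hN u v hNu).1

end Votes

end PopularEdge

theorem popular_edge_tight_general {V : Type*} [Fintype V] [DecidableEq V]
    (adj : V → V → Prop) (hadjirr : ∀ u, ¬ adj u u)
    (pref : V → V → V → Bool)
    (hpirr : ∀ u a, pref u a a = false)
    (hasym : ∀ u a b, pref u a b = true → pref u b a = false)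
    (htot : ∀ u a b, adj u a → adj u b → a ≠ b → pref u a b = true ∨ pref u b a = true)
    (M : V → Option V) (hM : IsMatching adj M)
    (α : V → ℝ) (hsum : ∑ u : V, α u = 0)
    (hedge : ∀ a b, adj a b → α a + α b ≥ ((wtEdge pref M a b : ℤ) : ℝ))
    (hself : ∀ u, α u ≥ ((wtSelf M u : ℤ) : ℝ))
    (a b : V)
    (hpopedge : ∃ N, IsMatching adj N ∧ Popular adj pref N ∧ N a = some b) :
    α a + α b = ((wtEdge pref M a b : ℤ) : ℝ) := by
  obtain ⟨N, hN, hNpop, hNab⟩ := hpopedge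
  set slack : V → ℝ := fun u => α u - voteFor pref N M u
  have hpair (u : V) : 0 ≤ slack u + slack (partner N u) := by
    linarith [voteFor_add_partner_le hN hM hadjirr α hedge hself u]
  have hΔ : 0 ≤ ∑ u, voteFor pref N M u := by
    rw [sum_voteFor_eq_phiM_sub hN hM hadjirr hpirr hasym htot, sub_nonneg]
    exact_mod_cast hNpop M hM
  have hslack : ∑ u, slack u ≤ 0 := by
    simp only [slack, Finset.sum_sub_distrib, hsum]
    have : (0 : ℝ) ≤ ∑ u, (voteFor pref N M u : ℝ) := by exact_mod_cast hΔ
    linarith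
  have htight := hN.partner_involutive.add_comp_eq_zero_of_sum_nonpos hpair hslack a
  have hwt : (voteFor pref N M a : ℝ) + voteFor pref N M b = wtEdge pref M a b := by
    exact_mod_cast voteFor_add_voteFor_eq_wtEdge hN hNab
  simp only [slack, partner, hNab, Option.getD_some] at htight
  linarith

/-- If `M` admits a witness `α` and the edge `(a,b)` belongs to some popular
matching of the bipartite instance `H`, then `α_a + α_b = wt_M(a,b)`. -/
theorem popular_edge_tight {V : Type*} [Fintype V] [DecidableEq V]
    (adj : V → V → Prop) (hsymm : ∀ u v, adj u v → adj v u) (hadjirr : ∀ u, ¬ adj u u)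
    (side : V → Bool) (hbip : ∀ u v, adj u v → side u ≠ side v)
    (pref : V → V → V → Bool)
    (hpirr : ∀ u a, pref u a a = false)
    (hasym : ∀ u a b, pref u a b = true → pref u b a = false)
    (htrans : ∀ u a b c, pref u a b = true → pref u b c = true → pref u a c = true)
    (htot : ∀ u a b, adj u a → adj u b → a ≠ b → pref u a b = true ∨ pref u b a = true)
    (M : V → Option V) (hM : IsMatching adj M)
    (α : V → ℝ) (hsum : ∑ u : V, α u = 0)
    (hedge : ∀ a b, adj a b → α a + α b ≥ ((wtEdge pref M a b : ℤ) : ℝ))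
    (hself : ∀ u, α u ≥ ((wtSelf M u : ℤ) : ℝ))
    (a b : V) (hab : adj a b)
    (hpopedge : ∃ N, IsMatching adj N ∧ Popular adj pref N ∧ N a = some b) :
    α a + α b = ((wtEdge pref M a b : ℤ) : ℝ) :=
  popular_edge_tight_general adj hadjirr pref hpirr hasym htot M hM α hsum hedge hself a b hpopedge
end

section
/- Let G be a graph with strict preferences, let M be a matching, and suppose ρ = (v, u, w, t) is an alternating path where v is unmatched in M, (u,w) ∈ M, (w,t) is a blocking edge with respect to M with t matched in M to some vertex t' ∉ {v,u,w}. Suppose further that u prefers w to v. Then exactly three vertices (v, w, t) prefer M ⊕ {(v,u),(u,w),(w,t)} together with removing (t,t') — call it M' = (M \ {(u,w),(t,t')}) ∪ {(v,u),(w,t)} — to M, and exactly two vertices (u, t') prefer M to M'; hence M' is more popular than M and M is not popular. -/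
open Finset

/-- Along the alternating path `ρ = (v,u,w,t)` with `v` unmatched, `(u,w) ∈ M`,
`(w,t)` blocking and `M t = some t'`, with `u` preferring `w` to `v`: exactly
`v,w,t` prefer `M' = (M \ {(u,w),(t,t')}) ∪ {(v,u),(w,t)}` to `M`, exactly `u,t'`
prefer `M` to `M'`; hence `M'` is more popular than `M` and `M` is not popular. -/
theorem alternating_path_not_popular {V : Type*} [Fintype V] [DecidableEq V]
    (adj : V → V → Prop) (hsymm : ∀ u v, adj u v → adj v u)
    (pref : V → V → V → Bool)
    (hpirr : ∀ u a, pref u a a = false)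
    (hasym : ∀ u a b, pref u a b = true → pref u b a = false)
    (M : V → Option V) (hM : IsMatching adj M)
    (v u w t t' : V)
    (hdist : v ≠ u ∧ v ≠ w ∧ v ≠ t ∧ v ≠ t' ∧ u ≠ w ∧ u ≠ t ∧ u ≠ t' ∧ w ≠ t ∧ w ≠ t' ∧ t ≠ t')
    (hv : M v = none) (hvu : adj v u) (huw : M u = some w)
    (hblock : Blocking adj pref M w t) (htt' : M t = some t')
    (hu_worse : pref u w v = true) :
    (∀ x, PrefersM pref
        (fun x => if x = v then some u else if x = u then some v else if x = w then some t
          else if x = t then some w else if x = t' then none else M x) M x = true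
        ↔ (x = v ∨ x = w ∨ x = t)) ∧
    (∀ x, PrefersM pref M
        (fun x => if x = v then some u else if x = u then some v else if x = w then some t
          else if x = t then some w else if x = t' then none else M x) x = true
        ↔ (x = u ∨ x = t')) ∧
    phiM pref
        (fun x => if x = v then some u else if x = u then some v else if x = w then some t
          else if x = t then some w else if x = t' then none else M x) M
      > phiM pref M
        (fun x => if x = v then some u else if x = u then some v else if x = w then some t
          else if x = t then some w else if x = t' then none else M x) ∧
    ¬ Popular adj pref M := by

  obtain ⟨hvu', hvw, hvt, hvt', huw', hut, hut', hwt, hwt', htt''⟩ := hdist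
  have hMw : M w = some u := (hM u w huw).2
  have hMt' : M t' = some t := (hM t t' htt').2
  obtain ⟨hadjwt, hbw, hbt⟩ := hblock
  simp only [PrefOver, hMw] at hbw
  simp only [PrefOver, htt'] at hbt
  have hwu : pref w u t = false := hasym _ _ _ hbw
  have htw : pref t t' w = false := hasym _ _ _ hbt
  have huv : pref u v w = false := hasym _ _ _ hu_worse
  set M' : V → Option V := (fun x => if x = v then some u else if x = u then some v
      else if x = w then some t else if x = t then some w else if x = t' then none else M x)
    with hM'def
  have hM'v : M' v = some u := by simp [hM'def]
  have hM'u : M' u = some v := by simp [hM'def, hvu'.symm]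
  have hM'w : M' w = some t := by simp [hM'def, hvw.symm, huw'.symm]
  have hM't : M' t = some w := by simp [hM'def, hvt.symm, hut.symm, hwt.symm]
  have hM't' : M' t' = none := by simp [hM'def, hvt'.symm, hut'.symm, hwt'.symm, htt''.symm]
  have hM'other : ∀ x, x ≠ v → x ≠ u → x ≠ w → x ≠ t → x ≠ t' → M' x = M x := by
    intro x h1 h2 h3 h4 h5; simp [hM'def, h1, h2, h3, h4, h5]
  have key1 : ∀ x, PrefersM pref M' M x = true ↔ (x = v ∨ x = w ∨ x = t) := by
    intro x
    by_cases h1 : x = v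
    · subst h1; simp [PrefersM, hM'v, hv]
    by_cases h2 : x = u
    · subst h2; simp [PrefersM, hM'u, huw, huv, Ne.symm hvu', huw', hut]
    by_cases h3 : x = w
    · subst h3; simp [PrefersM, hM'w, hMw, hbw]
    by_cases h4 : x = t
    · subst h4; simp [PrefersM, hM't, htt', hbt]
    by_cases h5 : x = t'
    · subst h5; simp [PrefersM, hM't', hMt', hvt'.symm, hwt'.symm, htt''.symm]
    · rcases h : M x with _ | a <;>
        simp [PrefersM, hM'other x h1 h2 h3 h4 h5, h, hpirr, h1, h3, h4]
  have key2 : ∀ x, PrefersM pref M M' x = true ↔ (x = u ∨ x = t') := by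
    intro x
    by_cases h1 : x = v
    · subst h1; simp [PrefersM, hM'v, hv, hvu', hvt']
    by_cases h2 : x = u
    · subst h2; simp [PrefersM, hM'u, huw, hu_worse]
    by_cases h3 : x = w
    · subst h3; simp [PrefersM, hM'w, hMw, hwu, hwt', Ne.symm huw']
    by_cases h4 : x = t
    · subst h4; simp [PrefersM, hM't, htt', htw, hut.symm, htt'']
    by_cases h5 : x = t'
    · subst h5; simp [PrefersM, hM't', hMt']
    · rcases h : M x with _ | a <;>
        simp [PrefersM, hM'other x h1 h2 h3 h4 h5, h, hpirr, h2, h5]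
  have hset1 : Finset.univ.filter (fun x => PrefersM pref M' M x = true) = {v, w, t} := by
    ext x; simp [key1 x]
  have hset2 : Finset.univ.filter (fun x => PrefersM pref M M' x = true) = {u, t'} := by
    ext x; simp [key2 x]
  have hcard1 : phiM pref M' M = 3 := by
    rw [phiM, hset1]
    rw [Finset.card_insert_of_notMem (by simp [hvw, hvt]),
        Finset.card_insert_of_notMem (by simp [hwt]), Finset.card_singleton]
  have hcard2 : phiM pref M M' = 2 := by
    rw [phiM, hset2]
    rw [Finset.card_insert_of_notMem (by simp [hut']), Finset.card_singleton]
  have hgt : phiM pref M' M > phiM pref M M' := by rw [hcard1, hcard2]; omega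
  have hmatch : IsMatching adj M' := by
    intro x y hxy
    by_cases h1 : x = v
    · subst h1; rw [hM'v] at hxy; obtain rfl := Option.some.inj hxy
      exact ⟨hvu, hM'u⟩
    by_cases h2 : x = u
    · subst h2; rw [hM'u] at hxy; obtain rfl := Option.some.inj hxy
      exact ⟨hsymm _ _ hvu, hM'v⟩
    by_cases h3 : x = w
    · subst h3; rw [hM'w] at hxy; obtain rfl := Option.some.inj hxy
      exact ⟨hadjwt, hM't⟩
    by_cases h4 : x = t
    · subst h4; rw [hM't] at hxy; obtain rfl := Option.some.inj hxy
      exact ⟨hsymm _ _ hadjwt, hM'w⟩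
    by_cases h5 : x = t'
    · subst h5; rw [hM't'] at hxy; exact absurd hxy (by simp)
    · rw [hM'other x h1 h2 h3 h4 h5] at hxy
      obtain ⟨hadj, hyx⟩ := hM x y hxy
      refine ⟨hadj, ?_⟩
      have g1 : y ≠ v := by rintro rfl; rw [hv] at hyx; exact absurd hyx (by simp)
      have g2 : y ≠ u := by rintro rfl; rw [huw] at hyx; exact h3 (Option.some.inj hyx).symm
      have g3 : y ≠ w := by rintro rfl; rw [hMw] at hyx; exact h2 (Option.some.inj hyx).symm
      have g4 : y ≠ t := by rintro rfl; rw [htt'] at hyx; exact h5 (Option.some.inj hyx).symm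
      have g5 : y ≠ t' := by rintro rfl; rw [hMt'] at hyx; exact h4 (Option.some.inj hyx).symm
      rw [hM'other y g1 g2 g3 g4 g5]; exact hyx
  exact ⟨key1, key2, hgt, fun hpop => by have := hpop M' hmatch; omega⟩
end

section
/- In a bipartite instance H with strict preference lists, if M is a popular matching and v is a vertex that is matched in every stable matching of H, then v is matched in M. -/
/-
If `v` were unmatched in the popular matching `M`, take a stable matching `S`, which matches `v`.
Whenever `u` prefers `M` to `S`, its `M`-partner `w` must prefer `S` to `M`, since otherwise `(u, w)`
would block `S`. Sending `u` to its `M`-partner is injective, and it misses `v`, which prefers `S`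
to `M` but has no `M`-partner. Hence strictly more vertices prefer `S` to `M` than the reverse,
contradicting popularity.
-/

open Finset

section

variable {V : Type*} {adj : V → V → Prop} {pref : V → V → V → Bool} {M S : V → Option V}
  {u w : V}

theorem IsMatching.eq_of_eq_some (hM : IsMatching adj M) {u₁ u₂ w : V} (h₁ : M u₁ = some w)
    (h₂ : M u₂ = some w) : u₁ = u₂ :=
  Option.some_injective _ <| (hM u₁ w h₁).2.symm.trans (hM u₂ w h₂).2

theorem exists_eq_some_of_prefersM (h : PrefersM pref M S u = true) : ∃ w, M u = some w := by
  cases hMu : M u with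
  | none => simp [PrefersM, hMu] at h
  | some w => exact ⟨w, rfl⟩

theorem prefOver_of_prefersM (hMu : M u = some w) (h : PrefersM pref M S u = true) :
    PrefOver pref S u w := by
  unfold PrefOver
  cases hSu : S u with
  | none => trivial
  | some x => simpa [PrefersM, hMu, hSu] using h

theorem prefOver_partner_of_not_prefersM (hM : IsMatching adj M) (hS : IsMatching adj S)
    (hpirr : ∀ u a, pref u a a = false)
    (htot : ∀ u a b, adj u a → adj u b → a ≠ b → pref u a b = true ∨ pref u b a = true)
    (hMu : M u = some w) (hu : PrefersM pref M S u = true) (hw : PrefersM pref S M w = false) :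
    PrefOver pref S w u := by
  have hMw : M w = some u := (hM u w hMu).2
  unfold PrefOver
  cases hSw : S w with
  | none => trivial
  | some y =>
    have hyu : y ≠ u := by
      rintro rfl
      have hSu : S y = some w := (hS w y hSw).2
      simp [PrefersM, hMu, hSu, hpirr] at hu
    simp only [PrefersM, hSw, hMw] at hw
    simpa [hw] using htot w u y (hM w u hMw).1 (hS w y hSw).1 hyu.symm

theorem prefersM_partner_of_stable (hM : IsMatching adj M) (hS : IsMatching adj S)
    (hstable : ∀ a b, ¬ Blocking adj pref S a b) (hpirr : ∀ u a, pref u a a = false)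
    (htot : ∀ u a b, adj u a → adj u b → a ≠ b → pref u a b = true ∨ pref u b a = true)
    (hMu : M u = some w) (hu : PrefersM pref M S u = true) : PrefersM pref S M w = true := by
  by_contra hw
  exact hstable u w ⟨(hM u w hMu).1, prefOver_of_prefersM hMu hu,
    prefOver_partner_of_not_prefersM hM hS hpirr htot hMu hu (Bool.eq_false_iff.mpr hw)⟩

theorem phiM_lt_of_partner_prefers [Fintype V] (hM : IsMatching adj M)
    (hpartner : ∀ u w, M u = some w → PrefersM pref M S u = true → PrefersM pref S M w = true)
    {v : V} (hMv : M v = none) (hSv : (S v).isSome) : phiM pref M S < phiM pref S M := by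
  classical
  set preferM := univ.filter fun u => PrefersM pref M S u = true
  set preferS := univ.filter fun u => PrefersM pref S M u = true
  set partner : V → V := fun u => (M u).getD u
  have partner_eq : ∀ {u w}, M u = some w → partner u = w := fun h => by simp [partner, h]
  have hmaps : Set.MapsTo partner preferM (preferS.erase v) := by
    intro u hu
    obtain ⟨w, hMu⟩ := exists_eq_some_of_prefersM (mem_filter.mp hu).2
    rw [partner_eq hMu, mem_coe, mem_erase, mem_filter]
    refine ⟨?_, mem_univ w, hpartner u w hMu (mem_filter.mp hu).2⟩
    rintro rfl
    simp [(hM u w hMu).2] at hMv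
  have hinj : Set.InjOn partner preferM := by
    intro u₁ hu₁ u₂ hu₂ heq
    obtain ⟨w₁, h₁⟩ := exists_eq_some_of_prefersM (mem_filter.mp hu₁).2
    obtain ⟨w₂, h₂⟩ := exists_eq_some_of_prefersM (mem_filter.mp hu₂).2
    rw [partner_eq h₁, partner_eq h₂] at heq
    exact hM.eq_of_eq_some h₁ (heq ▸ h₂)
  have hvS : v ∈ preferS := by
    obtain ⟨s, hs⟩ := Option.isSome_iff_exists.mp hSv
    exact mem_filter.mpr ⟨mem_univ v, by simp [PrefersM, hs, hMv]⟩
  change #preferM < #preferS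
  exact (card_le_card_of_injOn partner hmaps hinj).trans_lt (card_erase_lt_of_mem hvS)

end

theorem popular_matches_stable_vertex_general {V : Type*} [Fintype V]
    (adj : V → V → Prop)
    (pref : V → V → V → Bool)
    (hpirr : ∀ u a, pref u a a = false)
    (htot : ∀ u a b, adj u a → adj u b → a ≠ b → pref u a b = true ∨ pref u b a = true)
    (hexists : ∃ S, IsMatching adj S ∧ ∀ a b, ¬ Blocking adj pref S a b)
    (M : V → Option V) (hM : IsMatching adj M) (hpop : Popular adj pref M)
    (v : V)
    (hv : ∀ S, IsMatching adj S → (∀ a b, ¬ Blocking adj pref S a b) → (S v).isSome) :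
    (M v).isSome := by
  by_contra hMv
  obtain ⟨S, hS, hstable⟩ := hexists
  have hlt : phiM pref M S < phiM pref S M :=
    phiM_lt_of_partner_prefers hM
      (fun _ _ => prefersM_partner_of_stable hM hS hstable hpirr htot)
      (Option.not_isSome_iff_eq_none.mp hMv) (hv S hS hstable)
  exact (hpop S hS).not_gt hlt

/-- In a bipartite instance, every popular matching matches any vertex that is
matched in every stable matching. -/
theorem popular_matches_stable_vertex {V : Type*} [Fintype V] [DecidableEq V]
    (adj : V → V → Prop) (hsymm : ∀ u v, adj u v → adj v u) (hadjirr : ∀ u, ¬ adj u u)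
    (side : V → Bool) (hbip : ∀ u v, adj u v → side u ≠ side v)
    (pref : V → V → V → Bool)
    (hpirr : ∀ u a, pref u a a = false)
    (hasym : ∀ u a b, pref u a b = true → pref u b a = false)
    (htrans : ∀ u a b c, pref u a b = true → pref u b c = true → pref u a c = true)
    (htot : ∀ u a b, adj u a → adj u b → a ≠ b → pref u a b = true ∨ pref u b a = true)
    (hexists : ∃ S, IsMatching adj S ∧ ∀ a b, ¬ Blocking adj pref S a b)
    (M : V → Option V) (hM : IsMatching adj M) (hpop : Popular adj pref M)
    (v : V)
    (hv : ∀ S, IsMatching adj S → (∀ a b, ¬ Blocking adj pref S a b) → (S v).isSome) :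
    (M v).isSome :=
  popular_matches_stable_vertex_general adj pref hpirr htot hexists M hM hpop v hv
end
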